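/- Let a > 0, σ > 0, let π be the Gaussian mixture distribution on ℝ with density π(z) = (1/2)·N(z; −a, σ²) + (1/2)·N(z; a, σ²), and let ρ = N(0,1). Let F_π and F_ρ denote the cumulative distribution functions of π and ρ, and let T = F_ρ⁻¹ ∘ F_π be the increasing transport map pushing π forward to ρ. Then the bi-Lipschitz constant of T satisfies BiLip(T) ≥ (T⁻¹)′(0) = σ·exp(a²/(2σ²)). -/

import Mathlib

open MeasureTheory

noncomputable section

/-- Density of the one-dimensional Gaussian with mean `m` and variance `v`, evaluated at `x`. -/
def gpdf (m v x : ℝ) : ℝ := (Real.sqrt (2 * Real.pi * v))⁻¹ * Real.exp (-(x - m) ^ 2 / (2 * v))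

/-- Cumulative distribution function associated with a density `p`. -/
def cdfOf (p : ℝ → ℝ) (z : ℝ) : ℝ := ∫ t in Set.Iic z, p t

/-- The bi-Lipschitz constant of `f : ℝ → ℝ`: the infimum over `M ∈ [1, ∞]` such that
`M⁻¹ * |z - z'| ≤ |f z - f z'| ≤ M * |z - z'|` for all `z ≠ z'`. -/
def biLip (f : ℝ → ℝ) : ENNReal :=
  sInf {M : ENNReal | 1 ≤ M ∧ ∀ z z' : ℝ, z ≠ z' →
    M⁻¹ * ENNReal.ofReal |z - z'| ≤ ENNReal.ofReal |f z - f z'| ∧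
    ENNReal.ofReal |f z - f z'| ≤ M * ENNReal.ofReal |z - z'|}

section Aux

open Set Filter ProbabilityTheory

lemma invFun_self' {f : ℝ → ℝ} (hm : StrictMono f) (x : ℝ) : Function.invFun f (f x) = x :=
  Function.leftInverse_invFun hm.injective x

lemma surj_between {f : ℝ → ℝ} (hc : Continuous f) (hm : StrictMono f) {u v y : ℝ}
    (hy : y ∈ Ioo (f u) (f v)) : ∃ x ∈ Ioo u v, f x = y := by
  have huv : u ≤ v := (hm.lt_iff_lt.1 (hy.1.trans hy.2)).le
  obtain ⟨x, hx, hfx⟩ := intermediate_value_Ioo huv hc.continuousOn hy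
  exact ⟨x, hx, hfx⟩

lemma eventually_rightInv {f : ℝ → ℝ} (hc : Continuous f) (hm : StrictMono f) (x₀ : ℝ) :
    ∀ᶠ y in nhds (f x₀), f (Function.invFun f y) = y := by
  have hmem : Ioo (f (x₀ - 1)) (f (x₀ + 1)) ∈ nhds (f x₀) :=
    Ioo_mem_nhds (hm (by linarith)) (hm (by linarith))
  filter_upwards [hmem] with y hy
  obtain ⟨x, _, hfx⟩ := surj_between hc hm hy
  exact Function.invFun_eq ⟨x, hfx⟩

lemma contAt_invFun {f : ℝ → ℝ} (hc : Continuous f) (hm : StrictMono f) (x₀ : ℝ) :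
    ContinuousAt (Function.invFun f) (f x₀) := by
  rw [ContinuousAt, invFun_self' hm, Metric.tendsto_nhds]
  intro ε hε
  have hmem : Ioo (f (x₀ - ε)) (f (x₀ + ε)) ∈ nhds (f x₀) :=
    Ioo_mem_nhds (hm (by linarith)) (hm (by linarith))
  filter_upwards [hmem] with y hy
  obtain ⟨x, hx, hfx⟩ := surj_between hc hm hy
  rw [← hfx, invFun_self' hm, Real.dist_eq, abs_lt]
  exact ⟨by linarith [hx.1], by linarith [hx.2]⟩

lemma hasDerivAt_invFun' {f : ℝ → ℝ} (hc : Continuous f) (hm : StrictMono f) {x₀ d : ℝ}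
    (hf : HasDerivAt f d x₀) (hd : d ≠ 0) :
    HasDerivAt (Function.invFun f) d⁻¹ (f x₀) := by
  refine HasDerivAt.of_local_left_inverse (contAt_invFun hc hm x₀) ?_ hd
    (eventually_rightInv hc hm x₀)
  rwa [invFun_self' hm]

lemma cdf_sub {q : ℝ → ℝ} (hi : Integrable q) (w z : ℝ) :
    cdfOf q z - cdfOf q w = ∫ t in w..z, q t :=
  intervalIntegral.integral_Iic_sub_Iic hi.integrableOn hi.integrableOn

lemma cdf_hasDerivAt {q : ℝ → ℝ} (hc : Continuous q) (hi : Integrable q) (z : ℝ) :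
    HasDerivAt (cdfOf q) (q z) z := by
  have heq : ∀ x, cdfOf q x = cdfOf q 0 + ∫ t in (0:ℝ)..x, q t := by
    intro x
    rw [← cdf_sub hi 0 x]; ring
  have h : HasDerivAt (fun x => cdfOf q 0 + ∫ t in (0:ℝ)..x, q t) (q z) z := by
    exact (intervalIntegral.integral_hasDerivAt_right hi.intervalIntegrable
      (hc.stronglyMeasurableAtFilter _ _) hc.continuousAt).const_add _
  exact h.congr_deriv rfl |>.congr_of_eventuallyEq (Eventually.of_forall heq)

lemma cdf_strictMono {q : ℝ → ℝ} (hpos : ∀ x, 0 < q x)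
    (hi : Integrable q) : StrictMono (cdfOf q) := by
  intro w z hwz
  have h := cdf_sub hi w z
  have hpos' : 0 < ∫ t in w..z, q t :=
    intervalIntegral.intervalIntegral_pos_of_pos_on hi.intervalIntegrable
      (fun x _ => hpos x) hwz
  linarith

lemma cdf_continuous {q : ℝ → ℝ} (hc : Continuous q) (hi : Integrable q) :
    Continuous (cdfOf q) :=
  continuous_iff_continuousAt.2 fun z => (cdf_hasDerivAt hc hi z).continuousAt

lemma cdf_mem_Ioo {q : ℝ → ℝ} (hpos : ∀ x, 0 < q x)
    (hi : Integrable q) (h1 : ∫ x, q x = 1) (z : ℝ) : cdfOf q z ∈ Ioo (0:ℝ) 1 := by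
  have hlow : cdfOf q (z - 1) < cdfOf q z := cdf_strictMono hpos hi (by linarith)
  have h0 : 0 ≤ cdfOf q (z - 1) := setIntegral_nonneg measurableSet_Iic fun x _ => (hpos x).le
  have hup : cdfOf q z < cdfOf q (z + 1) := cdf_strictMono hpos hi (by linarith)
  have h1' : cdfOf q (z + 1) ≤ 1 := by
    have hsum := intervalIntegral.integral_Iic_add_Ioi (b := z + 1)
      hi.integrableOn hi.integrableOn
    have hpos2 : 0 ≤ ∫ x in Ioi (z + 1), q x :=
      setIntegral_nonneg measurableSet_Ioi fun x _ => (hpos x).le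
    rw [h1] at hsum
    simp only [cdfOf]
    linarith
  constructor <;> linarith

lemma cdf_surjOn {q : ℝ → ℝ} (hc : Continuous q) (hpos : ∀ x, 0 < q x)
    (hi : Integrable q) (h1 : ∫ x, q x = 1) {y : ℝ} (hy : y ∈ Ioo (0:ℝ) 1) :
    ∃ x, cdfOf q x = y := by
  have htop : Tendsto (fun n : ℕ => cdfOf q n) atTop (nhds 1) := by
    have h2 : Tendsto (fun n : ℕ => ∫ t in (0:ℝ)..(n:ℝ), q t) atTop
        (nhds (∫ x in Ioi (0:ℝ), q x)) :=
      intervalIntegral_tendsto_integral_Ioi 0 hi.integrableOn tendsto_natCast_atTop_atTop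
    have heq : ∀ n : ℕ, cdfOf q n = cdfOf q 0 + ∫ t in (0:ℝ)..(n:ℝ), q t := by
      intro n; rw [← cdf_sub hi 0 n]; ring
    have := (tendsto_const_nhds (x := cdfOf q 0)).add h2
    rw [show cdfOf q 0 + ∫ x in Ioi (0:ℝ), q x = 1 from by
      rw [← h1, ← intervalIntegral.integral_Iic_add_Ioi hi.integrableOn hi.integrableOn];
      rfl] at this
    exact this.congr fun n => (heq n).symm
  have hbot : Tendsto (fun n : ℕ => cdfOf q (-n)) atTop (nhds 0) := by
    have h2 : Tendsto (fun n : ℕ => ∫ t in (-(n:ℝ))..(0:ℝ), q t) atTop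
        (nhds (cdfOf q 0)) :=
      intervalIntegral_tendsto_integral_Iic 0 hi.integrableOn
        (tendsto_neg_atBot_iff.2 tendsto_natCast_atTop_atTop)
    have heq : ∀ n : ℕ, cdfOf q (-n) = cdfOf q 0 - ∫ t in (-(n:ℝ))..(0:ℝ), q t := by
      intro n; rw [← cdf_sub hi (-(n:ℝ)) 0]; ring
    have := (tendsto_const_nhds (x := cdfOf q 0)).sub h2
    rw [sub_self] at this
    exact this.congr fun n => (heq n).symm
  obtain ⟨m, hm⟩ := (htop.eventually (eventually_gt_nhds hy.2)).exists
  obtain ⟨n, hn⟩ := (hbot.eventually (eventually_lt_nhds hy.1)).exists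
  have hmem : y ∈ Ioo (cdfOf q (-(n:ℝ))) (cdfOf q m) := ⟨hn, hm⟩
  obtain ⟨x, _, hx⟩ := intermediate_value_Ioo
    (((cdf_strictMono hpos hi).lt_iff_lt).1 (hmem.1.trans hmem.2)).le
    (cdf_continuous hc hi).continuousOn hmem
  exact ⟨x, hx⟩

lemma cdf_half {q : ℝ → ℝ} (hi : Integrable q) (h1 : ∫ x, q x = 1)
    (heven : ∀ x, q (-x) = q x) : cdfOf q 0 = 1 / 2 := by
  have e1 : (∫ x in Ioi (0:ℝ), q (-x)) = ∫ x in Iic (-(0:ℝ)), q x :=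
    integral_comp_neg_Ioi 0 q
  simp only [neg_zero] at e1
  simp_rw [heven] at e1
  have e2 := intervalIntegral.integral_Iic_add_Ioi (b := (0:ℝ))
    hi.integrableOn hi.integrableOn
  rw [h1] at e2
  simp only [cdfOf]
  linarith

lemma gpdf_eq (m : ℝ) {v : ℝ} (hv : 0 < v) :
    gpdf m v = gaussianPDFReal m ⟨v, hv.le⟩ := rfl

lemma gpdf_pos (m : ℝ) {v : ℝ} (hv : 0 < v) (x : ℝ) : 0 < gpdf m v x := by
  rw [gpdf_eq m hv]
  exact gaussianPDFReal_pos _ _ _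
    (by intro h; exact hv.ne' (congrArg Subtype.val h))

lemma gpdf_integrable (m : ℝ) {v : ℝ} (hv : 0 < v) : Integrable (gpdf m v) := by
  rw [gpdf_eq m hv]; exact integrable_gaussianPDFReal _ _

lemma gpdf_integral (m : ℝ) {v : ℝ} (hv : 0 < v) : ∫ x, gpdf m v x = 1 := by
  rw [gpdf_eq m hv]
  exact integral_gaussianPDFReal_eq_one _
    (by intro h; exact hv.ne' (congrArg Subtype.val h))

lemma gpdf_continuous (m v : ℝ) : Continuous (gpdf m v) := by
  unfold gpdf; fun_prop

end Aux

open Set Filter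

/-- For the Gaussian mixture target
`π(z) = N(z; -a, σ²)/2 + N(z; a, σ²)/2` and the standard normal reference `ρ = N(0,1)`,
the increasing transport map `T = F_ρ⁻¹ ∘ F_π` pushing `π` forward to `ρ` satisfies
`BiLip(T) ≥ (T⁻¹)'(0) = σ · exp(a² / (2σ²))`. -/
theorem stmt0 (a σ : ℝ) (ha : 0 < a) (hσ : 0 < σ)
    (p : ℝ → ℝ) (hp : p = fun z => gpdf (-a) (σ ^ 2) z / 2 + gpdf a (σ ^ 2) z / 2)
    (T : ℝ → ℝ) (hT : T = Function.invFun (cdfOf (gpdf 0 1)) ∘ cdfOf p) :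
    HasDerivAt (Function.invFun T) (σ * Real.exp (a ^ 2 / (2 * σ ^ 2))) 0 ∧
      ENNReal.ofReal (σ * Real.exp (a ^ 2 / (2 * σ ^ 2))) ≤ biLip T := by
  have hv : (0:ℝ) < σ ^ 2 := by positivity
  set φ : ℝ → ℝ := gpdf 0 1 with hφ
  -- basic properties of φ
  have hφc : Continuous φ := gpdf_continuous 0 1
  have hφpos : ∀ x, 0 < φ x := gpdf_pos 0 one_pos
  have hφi : Integrable φ := gpdf_integrable 0 one_pos
  have hφ1 : ∫ x, φ x = 1 := gpdf_integral 0 one_pos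
  -- basic properties of p
  have hpc : Continuous p := by
    rw [hp]; exact ((gpdf_continuous (-a) (σ^2)).div_const 2).add
      ((gpdf_continuous a (σ^2)).div_const 2)
  have hppos : ∀ x, 0 < p x := by
    intro x; rw [hp]
    have := gpdf_pos (-a) hv x
    have := gpdf_pos a hv x
    dsimp only; linarith
  have hpi : Integrable p := by
    rw [hp]
    exact ((gpdf_integrable (-a) hv).div_const 2).add ((gpdf_integrable a hv).div_const 2)
  have hp1 : ∫ x, p x = 1 := by
    rw [hp]
    rw [integral_add ((gpdf_integrable (-a) hv).div_const 2)
      ((gpdf_integrable a hv).div_const 2), integral_div, integral_div,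
      gpdf_integral (-a) hv, gpdf_integral a hv]
    norm_num
  have hpeven : ∀ x, p (-x) = p x := by
    intro x; rw [hp]
    dsimp only
    have e1 : gpdf (-a) (σ^2) (-x) = gpdf a (σ^2) x := by
      unfold gpdf; congr 2; ring
    have e2 : gpdf a (σ^2) (-x) = gpdf (-a) (σ^2) x := by
      unfold gpdf; congr 2; ring
    rw [e1, e2]; ring
  have hφeven : ∀ x, φ (-x) = φ x := by
    intro x; unfold φ; unfold gpdf; congr 2; ring
  -- CDFs
  have hFρc : Continuous (cdfOf φ) := cdf_continuous hφc hφi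
  have hFρm : StrictMono (cdfOf φ) := cdf_strictMono hφpos hφi
  have hFπc : Continuous (cdfOf p) := cdf_continuous hpc hpi
  have hFπm : StrictMono (cdfOf p) := cdf_strictMono hppos hpi
  have hhalfρ : cdfOf φ 0 = 1 / 2 := cdf_half hφi hφ1 hφeven
  have hhalfπ : cdfOf p 0 = 1 / 2 := cdf_half hpi hp1 hpeven
  -- derivative values
  set c : ℝ := σ * Real.exp (a ^ 2 / (2 * σ ^ 2)) with hc
  have hcpos : 0 < c := by positivity
  set d : ℝ := (φ 0)⁻¹ * p 0 with hd
  have hdc : d = c⁻¹ := by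
    have hsqrt : Real.sqrt (2 * Real.pi * σ ^ 2) = Real.sqrt (2 * Real.pi) * σ := by
      rw [Real.sqrt_mul (by positivity), Real.sqrt_sq hσ.le]
    have hπpos : 0 < Real.sqrt (2 * Real.pi) := Real.sqrt_pos.2 (by positivity)
    have hp0 : p 0 = (Real.sqrt (2 * Real.pi) * σ)⁻¹ * Real.exp (-(a^2) / (2 * σ^2)) := by
      rw [hp]; dsimp only; unfold gpdf
      rw [hsqrt]
      norm_num
    have hφ0 : φ 0 = (Real.sqrt (2 * Real.pi))⁻¹ := by
      unfold φ; unfold gpdf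
      norm_num
    rw [hd, hp0, hφ0, hc]
    rw [neg_div, Real.exp_neg, inv_inv, mul_inv]
    have he : Real.exp (a^2/(2*σ^2)) ≠ 0 := Real.exp_ne_zero _
    field_simp
  have hdpos : 0 < d := by rw [hdc]; positivity
  have hFρd : HasDerivAt (cdfOf φ) (φ 0) 0 := cdf_hasDerivAt hφc hφi 0
  have hFπd : HasDerivAt (cdfOf p) (p 0) 0 := cdf_hasDerivAt hpc hpi 0
  have hhalf_eq : cdfOf p 0 = cdfOf φ 0 := by rw [hhalfρ, hhalfπ]
  have hg : HasDerivAt (Function.invFun (cdfOf φ)) (φ 0)⁻¹ (cdfOf p 0) := by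
    rw [hhalf_eq]
    exact hasDerivAt_invFun' hFρc hFρm hFρd (hφpos 0).ne'
  have hTd : HasDerivAt T d 0 := by
    rw [hT, hd]
    exact HasDerivAt.comp 0 hg hFπd
  have hT0 : T 0 = 0 := by
    rw [hT]
    show Function.invFun (cdfOf φ) (cdfOf p 0) = 0
    rw [hhalf_eq, invFun_self' hFρm]
  -- strict monotonicity and continuity of T
  have hTm : StrictMono T := by
    intro z z' hzz
    obtain ⟨u, hu⟩ := cdf_surjOn hφc hφpos hφi hφ1 (cdf_mem_Ioo hppos hpi hp1 z)
    obtain ⟨u', hu'⟩ := cdf_surjOn hφc hφpos hφi hφ1 (cdf_mem_Ioo hppos hpi hp1 z')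
    have h1 : cdfOf φ u < cdfOf φ u' := by rw [hu, hu']; exact hFπm hzz
    have hz1 : T z = u := by
      rw [hT]; show Function.invFun (cdfOf φ) (cdfOf p z) = u
      rw [← hu, invFun_self' hFρm]
    have hz2 : T z' = u' := by
      rw [hT]; show Function.invFun (cdfOf φ) (cdfOf p z') = u'
      rw [← hu', invFun_self' hFρm]
    rw [hz1, hz2]
    exact hFρm.lt_iff_lt.1 h1
  have hTc : Continuous T := by
    refine continuous_iff_continuousAt.2 fun z => ?_
    obtain ⟨u, hu⟩ := cdf_surjOn hφc hφpos hφi hφ1 (cdf_mem_Ioo hppos hpi hp1 z)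
    rw [hT]
    refine ContinuousAt.comp ?_ hFπc.continuousAt
    rw [← hu]
    exact contAt_invFun hFρc hFρm u
  -- derivative of the inverse
  have hinv : HasDerivAt (Function.invFun T) c 0 := by
    have := hasDerivAt_invFun' hTc hTm hTd hdpos.ne'
    rw [hT0] at this
    rwa [hdc, inv_inv] at this
  refine ⟨hinv, le_sInf fun M hM => ?_⟩
  obtain ⟨hM1, hMb⟩ := hM
  rcases eq_or_ne M ⊤ with rfl | hMne
  · exact le_top
  rw [ENNReal.ofReal_le_iff_le_toReal hMne]
  set t := M.toReal with ht
  -- key claim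
  have key : ∀ ε : ℝ, 0 < ε → (d + ε)⁻¹ ≤ t := by
    intro ε hε
    have hslope : Tendsto (slope T 0) (nhdsWithin 0 {0}ᶜ) (nhds d) :=
      hasDerivAt_iff_tendsto_slope.1 hTd
    have hev : ∀ᶠ z in nhdsWithin 0 {0}ᶜ, |slope T 0 z - d| < ε := by
      have := hslope.eventually (eventually_abs_sub_lt d hε)
      simpa using this
    obtain ⟨z, hzlt, hzne⟩ := (hev.and self_mem_nhdsWithin).exists
    have hzne' : z ≠ 0 := by simpa using hzne
    have habs : |T z| ≤ (d + ε) * |z| := by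
      have hslope_eq : slope T 0 z = T z / z := by
        rw [slope_def_field, hT0, sub_zero, sub_zero]
      rw [hslope_eq] at hzlt
      have h2 : |T z / z| ≤ d + ε := by
        have := abs_sub_abs_le_abs_sub (T z / z) d
        have hd' : |d| = d := abs_of_pos hdpos
        linarith [hzlt, abs_sub_abs_le_abs_sub (T z / z) d, hd'.le]
      calc |T z| = |T z / z| * |z| := by rw [← abs_mul]; congr 1; field_simp
      _ ≤ (d + ε) * |z| := by
        apply mul_le_mul_of_nonneg_right h2 (abs_nonneg z)
    have hlow := (hMb z 0 hzne').1
    rw [hT0, sub_zero, sub_zero] at hlow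
    have hup2 : ENNReal.ofReal |T z| ≤ ENNReal.ofReal ((d + ε) * |z|) :=
      ENNReal.ofReal_le_ofReal habs
    have hzabs : 0 < |z| := abs_pos.2 hzne'
    have h3 : M⁻¹ * ENNReal.ofReal |z| ≤ ENNReal.ofReal (d + ε) * ENNReal.ofReal |z| := by
      refine hlow.trans (hup2.trans ?_)
      rw [ENNReal.ofReal_mul (by linarith)]
    have h4 : M⁻¹ ≤ ENNReal.ofReal (d + ε) := by
      have hne0 : ENNReal.ofReal |z| ≠ 0 := (ENNReal.ofReal_pos.2 hzabs).ne'
      have hnetop : ENNReal.ofReal |z| ≠ ⊤ := ENNReal.ofReal_ne_top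
      exact (ENNReal.mul_le_mul_iff_left hne0 hnetop).1 h3
    have h5 : (ENNReal.ofReal (d + ε))⁻¹ ≤ M := by
      have := ENNReal.inv_le_inv.2 h4
      rwa [inv_inv] at this
    rw [← ENNReal.ofReal_inv_of_pos (by linarith)] at h5
    rw [ENNReal.ofReal_le_iff_le_toReal hMne] at h5
    exact h5
  -- conclude c ≤ t
  have htpos : 0 < t := lt_of_lt_of_le (by positivity) (key 1 one_pos)
  by_contra hcon
  push_neg at hcon
  -- hcon : t < c  with c = d⁻¹
  have hcd : c = d⁻¹ := by rw [hdc, inv_inv]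
  rw [hcd] at hcon
  have htinv : d < t⁻¹ := by
    have := (inv_strictAnti₀ htpos hcon)
    rwa [inv_inv] at this
  set ε := (t⁻¹ - d) / 2 with hε
  have hεpos : 0 < ε := by rw [hε]; linarith
  have hlt : d + ε < t⁻¹ := by rw [hε]; linarith
  have : t < (d + ε)⁻¹ := by
    have h6 := inv_strictAnti₀ (by linarith : (0:ℝ) < d + ε) hlt
    rwa [inv_inv] at h6
  linarith [key ε hεpos]
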